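/- arXiv:1708.06107 — 3 statements merged into one kernel-verified Lean document; each statement's English description precedes it below -/
import Mathlib

section
/- Let z ∈ 𝕊 have infinite order and let a ∈ 𝕊 have finite order. Then the homomorphism η : ℤ^(ℕ) → 𝕊 defined by η((n_k)) = a^{Σ_k n_k} (the value of the constant character sequence (a,a,a,…)) is continuous with respect to the supremum topology 𝒯_z ∨ 𝒯_{az} on ℤ^(ℕ). -/
/-! Writing `a ^ m = (a * z) ^ m * (z ^ m)⁻¹`, closeness of `x` and `y` in both `F₀(𝕊)`-components
of `T_z` and `T_{az}` forces `a ^ (y k)` to be uniformly close to `a ^ (x k)`. The powers of an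
element of finite order form a finite, hence uniformly discrete, set, so then
`a ^ (y k) = a ^ (x k)` for every `k`, and `η` is constant near `x`. -/

open Filter Topology

noncomputable section

/-- The convergent sequence `s = {0} ∪ {1/n : n ∈ ℕ}` as a subspace of `ℝ`. -/
def sSet : Set ℝ := {x : ℝ | x = 0 ∨ ∃ n : ℕ, 0 < n ∧ x = 1 / n}

/-- The natural map `s → ℤ^(ℕ)`, sending `0 ↦ 0` and `1/n ↦ e_n = single n 1`. -/
def sMap (x : sSet) : ℕ →₀ ℤ :=
  if (x : ℝ) = 0 then 0 else Finsupp.single ⌈(1 : ℝ) / (x : ℝ)⌉₊ 1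

/-- The topology of the Graev free abelian topological group `A_G(s)`, i.e. the finest
group topology on `ℤ^(ℕ)` making `sMap : s → ℤ^(ℕ)` continuous.  In Mathlib's lattice of
(group) topologies `t ≤ s` means `t` is *finer* than `s`, so the finest such group topology
is the `sInf` of the collection of all group topologies making `sMap` continuous; this
`sInf` itself makes `sMap` continuous, since `Continuous` into `t` means
`coinduced sMap _ ≤ t.toTopologicalSpace`, a condition preserved by `sInf`. -/
def tauGT : AddGroupTopology (ℕ →₀ ℤ) :=
  sInf {t : AddGroupTopology (ℕ →₀ ℤ) | @Continuous _ _ _ t.toTopologicalSpace sMap}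

/-- The topology `τ` of `A_G(s)` on `ℤ^(ℕ)`. -/
def tau : TopologicalSpace (ℕ →₀ ℤ) := tauGT.toTopologicalSpace

/-- `c₀(𝕊) = {(z_n) ∈ 𝕊^ℕ : z_n → 1}` as a subgroup of `𝕊^ℕ`. -/
def c0S : Subgroup (ℕ → Circle) where
  carrier := {u : ℕ → Circle | Tendsto u atTop (nhds 1)}
  one_mem' := tendsto_const_nhds
  mul_mem' := fun hu hv => by simpa [Pi.mul_def] using hu.mul hv
  inv_mem' := fun hu => by simpa [Pi.inv_def] using hu.inv

/-- The group `F₀(𝕊)`: the group `c₀(𝕊)` endowed (below) with the sup-metric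
`d((z_n),(w_n)) = sup_n |z_n - w_n|`. -/
def F0 : Type := c0S

instance : CommGroup F0 := inferInstanceAs (CommGroup c0S)

namespace F0

/-- The underlying sequence of an element of `F₀(𝕊)`. -/
def seq (u : F0) : ℕ → Circle := Subtype.val (p := fun u => u ∈ c0S) u

lemma seq_tendsto (u : F0) : Tendsto u.seq atTop (nhds 1) :=
  (Subtype.prop (p := fun u => u ∈ c0S) u : _)

lemma ext {u v : F0} (h : u.seq = v.seq) : u = v :=
  Subtype.ext (p := fun u => u ∈ c0S) h

/-- Construct an element of `F₀(𝕊)` from a sequence converging to `1`. -/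
def mk (u : ℕ → Circle) (hu : Tendsto u atTop (nhds 1)) : F0 :=
  Subtype.mk (p := fun u => u ∈ c0S) u hu

lemma dist_circle_le (a b : Circle) : dist a b ≤ 2 := by
  have : dist (a : ℂ) (b : ℂ) ≤ ‖(a : ℂ)‖ + ‖(b : ℂ)‖ := by
    rw [dist_eq_norm]; exact norm_sub_le _ _
  have ha : ‖(a : ℂ)‖ = 1 := a.norm_coe
  have hb : ‖(b : ℂ)‖ = 1 := b.norm_coe
  calc dist a b = dist (a : ℂ) (b : ℂ) := rfl
    _ ≤ 2 := by rw [ha, hb] at this; linarith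

lemma bddAbove_dist (u v : F0) :
    BddAbove (Set.range fun n => dist (u.seq n) (v.seq n)) := by
  refine ⟨2, ?_⟩
  rintro x ⟨n, rfl⟩
  exact dist_circle_le _ _

/-- `F₀(𝕊)` endowed with the metric `d((z_n),(w_n)) = sup_n |z_n - w_n|`. -/
instance : MetricSpace F0 where
  dist u v := ⨆ n, dist (u.seq n) (v.seq n)
  dist_self u := by simp
  dist_comm u v := by simp only [dist_comm]
  dist_triangle u v w := by
    refine ciSup_le fun n => ?_
    calc dist (u.seq n) (w.seq n) ≤ dist (u.seq n) (v.seq n) + dist (v.seq n) (w.seq n) :=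
          dist_triangle _ _ _
      _ ≤ (⨆ m, dist (u.seq m) (v.seq m)) + ⨆ m, dist (v.seq m) (w.seq m) :=
          add_le_add (le_ciSup (bddAbove_dist u v) n) (le_ciSup (bddAbove_dist v w) n)
  eq_of_dist_eq_zero := by
    intro u v h
    refine ext (funext fun n => ?_)
    have hn : dist (u.seq n) (v.seq n) ≤ 0 := h ▸ le_ciSup (bddAbove_dist u v) n
    exact eq_of_dist_eq_zero (le_antisymm hn dist_nonneg)

lemma dist_def (u v : F0) : dist u v = ⨆ n, dist (u.seq n) (v.seq n) := rfl

end F0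

/-- The monomorphism `T_z : ℤ^(ℕ) → A_G(s) × F₀(𝕊)`, `T_z((n_k)) = ((n_k), (z^{n_k})_k)`. -/
def Tz (z : Circle) (x : ℕ →₀ ℤ) : (ℕ →₀ ℤ) × F0 :=
  ⟨x, F0.mk (fun k => z ^ (x k)) (by
    have h : ∀ᶠ k in atTop, (1 : Circle) = z ^ (x k) := by
      obtain ⟨N, hN⟩ := x.support.finite_toSet.bddAbove
      filter_upwards [eventually_ge_atTop (N + 1)] with k hk
      have hx : x k = 0 := by
        by_contra hne
        have : k ≤ N := hN (Finsupp.mem_support_iff.mpr hne)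
        omega
      simp [hx]
    exact tendsto_const_nhds.congr' h)⟩

/-- The topology `𝒯_z` on `ℤ^(ℕ)` induced from `A_G(s) × F₀(𝕊)` via `T_z`,
where the first factor carries `τ` and the second the sup-metric topology. -/
def TzTop (z : Circle) : TopologicalSpace (ℕ →₀ ℤ) :=
  TopologicalSpace.induced (Tz z) (@instTopologicalSpaceProd _ _ tau inferInstance)

instance : IsIsometricSMul Circle Circle :=
  ⟨fun c => Isometry.of_dist_eq fun u v => by
    change dist ((c * u : Circle) : ℂ) ((c * v : Circle) : ℂ) = dist (u : ℂ) v
    rw [Circle.coe_mul, Circle.coe_mul, Complex.dist_eq, Complex.dist_eq, ← mul_sub, norm_mul,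
      Circle.norm_coe, one_mul]⟩

theorem dist_le_dist_mul_mul_add_dist {G : Type*} [CommGroup G] [PseudoMetricSpace G]
    [IsIsometricSMul G G] (a b c d : G) : dist a b ≤ dist (a * c) (b * d) + dist c d :=
  calc dist a b = dist (a * c) (b * c) := (dist_mul_right a b c).symm
    _ ≤ dist (a * c) (b * d) + dist (b * d) (b * c) := dist_triangle _ _ _
    _ = dist (a * c) (b * d) + dist c d := by rw [dist_mul_left, dist_comm d c]

theorem Set.Finite.exists_pos_forall_dist_lt_imp_eq {X : Type*} [MetricSpace X] {s : Set X}
    (hs : s.Finite) (x : X) : ∃ δ > 0, ∀ y ∈ s, dist y x < δ → y = x := by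
  have hnhds : (s \ {x})ᶜ ∈ 𝓝 x := hs.sdiff.isClosed.compl_mem_nhds fun h => h.2 rfl
  obtain ⟨δ, hδ, hball⟩ := Metric.mem_nhds_iff.mp hnhds
  refine ⟨δ, hδ, fun y hy hyx => ?_⟩
  by_contra hne
  exact hball hyx ⟨hy, hne⟩

theorem IsOfFinOrder.exists_pos_forall_dist_zpow_lt_imp_eq {G : Type*} [Group G] [MetricSpace G]
    [IsIsometricSMul G G] {a : G} (ha : IsOfFinOrder a) :
    ∃ δ > 0, ∀ m n : ℤ, dist (a ^ m) (a ^ n) < δ → a ^ m = a ^ n := by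
  obtain ⟨δ, hδ, hsep⟩ := ha.finite_zpowers.exists_pos_forall_dist_lt_imp_eq 1
  refine ⟨δ, hδ, fun m n hmn => ?_⟩
  have hmem : (a ^ n)⁻¹ * a ^ m ∈ Subgroup.zpowers a :=
    Subgroup.mul_mem _ (Subgroup.inv_mem _ (Subgroup.zpow_mem_zpowers a n))
      (Subgroup.zpow_mem_zpowers a m)
  have hdist : dist ((a ^ n)⁻¹ * a ^ m) 1 < δ := by
    rwa [← inv_mul_cancel (a ^ n), dist_mul_left]
  exact (inv_mul_eq_one.mp (hsep _ hmem hdist)).symm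

theorem zpow_finsuppSum_eq_of_forall_zpow_eq {ι G : Type*} [Group G] (a : G) {x y : ι →₀ ℤ}
    (h : ∀ k, a ^ y k = a ^ x k) : a ^ (y.sum fun _ n => n) = a ^ (x.sum fun _ n => n) := by
  rw [zpow_eq_zpow_iff_modEq, Int.modEq_iff_dvd, ← Finsupp.sum_sub_index fun _ _ _ => rfl]
  refine Finset.dvd_sum fun k _ => ?_
  rw [Finsupp.sub_apply, ← Int.modEq_iff_dvd, ← zpow_eq_zpow_iff_modEq]
  exact h k

theorem F0.dist_seq_le (u v : F0) (k : ℕ) : dist (u.seq k) (v.seq k) ≤ dist u v :=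
  le_ciSup (F0.bddAbove_dist u v) k

theorem Tz_snd_seq (z : Circle) (x : ℕ →₀ ℤ) (k : ℕ) : (Tz z x).2.seq k = z ^ x k := rfl

theorem continuous_Tz_snd (z : Circle) : Continuous[TzTop z, _] fun x => (Tz z x).2 :=
  @Continuous.comp _ _ _ (TzTop z) (@instTopologicalSpaceProd _ _ tau inferInstance) _ _ _
    (@continuous_snd _ _ tau _) continuous_induced_dom

theorem eventually_dist_Tz_snd_lt (z : Circle) (x : ℕ →₀ ℤ) {ε : ℝ} (hε : 0 < ε) :
    ∀ᶠ y in @nhds _ (TzTop z) x, dist (Tz z y).2 (Tz z x).2 < ε :=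
  (@Continuous.continuousAt _ _ (TzTop z) _ _ _ (continuous_Tz_snd z)).eventually
    (Metric.ball_mem_nhds _ hε)

theorem dist_zpow_apply_le (a z : Circle) (x y : ℕ →₀ ℤ) (k : ℕ) :
    dist (a ^ y k) (a ^ x k) ≤
      dist (Tz (a * z) y).2 (Tz (a * z) x).2 + dist (Tz z y).2 (Tz z x).2 := by
  refine (dist_le_dist_mul_mul_add_dist _ _ (z ^ y k) (z ^ x k)).trans (add_le_add ?_ ?_)
  · rw [← mul_zpow, ← mul_zpow, ← Tz_snd_seq, ← Tz_snd_seq]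
    exact F0.dist_seq_le (Tz (a * z) y).2 (Tz (a * z) x).2 k
  · exact F0.dist_seq_le (Tz z y).2 (Tz z x).2 k

theorem eventually_zpow_apply_eq (z : Circle) {a : Circle} (ha : IsOfFinOrder a) (x : ℕ →₀ ℤ) :
    ∀ᶠ y in @nhds _ (TzTop z ⊓ TzTop (a * z)) x, ∀ k, a ^ y k = a ^ x k := by
  obtain ⟨δ, hδ, hsep⟩ := ha.exists_pos_forall_dist_zpow_lt_imp_eq
  rw [nhds_inf]
  filter_upwards [(eventually_dist_Tz_snd_lt z x (half_pos hδ)).filter_mono inf_le_left,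
    (eventually_dist_Tz_snd_lt (a * z) x (half_pos hδ)).filter_mono inf_le_right] with y hz haz k
  exact hsep _ _ ((dist_zpow_apply_le a z x y k).trans_lt (by linarith))

/- In Mathlib's lattice of topologies `t ≤ s` means `t` is *finer* than `s`; hence the
classical supremum topology `𝒯_z ∨ 𝒯_{az}` (the least (group) topology finer than both,
i.e. the topology generated by the union of the two families of open sets) is the
lattice-theoretic infimum `TzTop z ⊓ TzTop (a * z)` below. -/

theorem eta_continuous_general (z a : Circle) (ha : ∃ r : ℕ, 0 < r ∧ a ^ r = 1) :
    @Continuous _ _ (TzTop z ⊓ TzTop (a * z)) _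
      (fun x : ℕ →₀ ℤ => a ^ (x.sum fun _ n => n)) := by
  refine @continuous_iff_continuousAt _ _ (TzTop z ⊓ TzTop (a * z)) _ _ |>.mpr fun x => ?_
  refine tendsto_const_nhds.congr' ?_
  filter_upwards [eventually_zpow_apply_eq z (isOfFinOrder_iff_pow_eq_one.mpr ha) x] with y hy
  exact (zpow_finsuppSum_eq_of_forall_zpow_eq a hy).symm

/-- For `z ∈ 𝕊` of infinite order and `a ∈ 𝕊` of finite order, the character
`η((n_k)) = a^{Σ_k n_k}` (the constant character sequence `(a, a, …)`) is continuous for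
the supremum topology `𝒯_z ∨ 𝒯_{az}`. -/
theorem eta_continuous (z a : Circle) (hz : ∀ n : ℕ, 0 < n → z ^ n ≠ 1)
    (ha : ∃ r : ℕ, 0 < r ∧ a ^ r = 1) :
    @Continuous _ _ (TzTop z ⊓ TzTop (a * z)) _
      (fun x : ℕ →₀ ℤ => a ^ (x.sum fun _ n => n)) :=
  eta_continuous_general z a ha

end
end

section
/- A group homomorphism χ : ℤ^(ℕ) → 𝕊 is continuous with respect to the topology τ of A_G(s) if and only if the sequence (χ(e_n))_{n∈ℕ} converges to 1 in 𝕊. In other words, the character group of A_G(s) is exactly c₀(𝕊), via the identification of χ with the sequence (χ(e_n)). -/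
open Filter Topology

noncomputable section

/-- `𝕊₊ = {z ∈ 𝕊 : Re z ≥ 0}`. -/
def SPlus : Set Circle := {z : Circle | 0 ≤ (z : ℂ).re}

/-- A character of an abelian group `G` is a homomorphism `G → 𝕊`. -/
def IsChar {G : Type*} [AddCommGroup G] (χ : G → Circle) : Prop :=
  ∀ x y : G, χ (x + y) = χ x * χ y

/-- Two topologies on an abelian group `G` are *compatible* if they have the same
continuous characters `G → 𝕊`. -/
def Compatible {G : Type*} [AddCommGroup G] (t₁ t₂ : TopologicalSpace G) : Prop :=
  ∀ χ : G → Circle, IsChar χ →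
    (@Continuous G Circle t₁ _ χ ↔ @Continuous G Circle t₂ _ χ)

/-- A subset `A` of a topological abelian group is *quasi-convex* if for every `g ∉ A`
there is a continuous character `χ` with `χ(A) ⊆ 𝕊₊` and `χ(g) ∉ 𝕊₊`. -/
def IsQuasiConvex {G : Type*} [AddCommGroup G] (t : TopologicalSpace G) (A : Set G) : Prop :=
  ∀ g : G, g ∉ A → ∃ χ : G → Circle, IsChar χ ∧ @Continuous G Circle t _ χ ∧
    (∀ a ∈ A, χ a ∈ SPlus) ∧ χ g ∉ SPlus

/-- A topological abelian group is *locally quasi-convex* if it has a neighborhood base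
at `0` consisting of quasi-convex sets. -/
def LocallyQuasiConvex {G : Type*} [AddCommGroup G] (t : TopologicalSpace G) : Prop :=
  ∀ U ∈ @nhds G t 0, ∃ V ∈ @nhds G t 0, V ⊆ U ∧ IsQuasiConvex t V

/-!
A character `χ` pulls the topology of `𝕊` back to a group topology on `ℤ^(ℕ)`. Since `τ` is the
finest group topology making `sMap` continuous, `χ` is `τ`-continuous exactly when `χ ∘ sMap` is
continuous on `s`. Finally `s` is homeomorphic to the one-point compactification of `ℕ`
(`n ↦ 1/(n+1)`, `∞ ↦ 0`), so a map out of `s` is continuous iff its values at `1/n` converge to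
its value at `0`; for `χ ∘ sMap` these are `χ(e_n)` and `χ(0) = 1`.
-/

namespace IsChar

variable {G : Type*} [AddCommGroup G] {χ : G → Circle}

lemma map_zero (hχ : IsChar χ) : χ 0 = 1 := by
  simpa using hχ 0 0

def inducedAddGroupTopology (hχ : IsChar χ) : AddGroupTopology G where
  toTopologicalSpace := .induced χ inferInstance
  toIsTopologicalAddGroup := topologicalAddGroup_induced
    (AddMonoidHom.mk' (fun x => Additive.ofMul (χ x)) hχ : G →+ Additive Circle)

lemma continuous_coinduced_iff {X : Type*} [TopologicalSpace X] (f : X → G) (hχ : IsChar χ) :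
    @Continuous _ _ (AddGroupTopology.coinduced f).toTopologicalSpace _ χ ↔ Continuous (χ ∘ f) := by
  let _ := (AddGroupTopology.coinduced f).toTopologicalSpace
  refine ⟨fun h => h.comp (AddGroupTopology.coinduced_continuous f), fun h => ?_⟩
  have hf : @Continuous _ _ _ hχ.inducedAddGroupTopology.toTopologicalSpace f :=
    continuous_induced_rng.2 h
  have hle : AddGroupTopology.coinduced f ≤ hχ.inducedAddGroupTopology :=
    sInf_le (continuous_iff_coinduced_le.1 hf)
  exact continuous_le_dom hle continuous_induced_dom

end IsChar

lemma tauGT_eq_coinduced : tauGT = AddGroupTopology.coinduced sMap := by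
  simp only [tauGT, AddGroupTopology.coinduced, continuous_iff_coinduced_le]

def onePointNatToSSet (x : OnePoint ℕ) : sSet :=
  x.elim ⟨0, Or.inl rfl⟩ fun n => ⟨1 / ((n + 1 : ℕ) : ℝ), Or.inr ⟨n + 1, n.succ_pos, rfl⟩⟩

lemma continuous_onePointNatToSSet : Continuous onePointNatToSSet := by
  rw [OnePoint.continuous_iff_from_nat, tendsto_subtype_rng]
  simpa [onePointNatToSSet] using tendsto_one_div_add_atTop_nhds_zero_nat (𝕜 := ℝ)

lemma bijective_onePointNatToSSet : Function.Bijective onePointNatToSSet := by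
  refine ⟨?_, ?_⟩
  · rintro (_ | m) (_ | n) h <;>
      simp only [onePointNatToSSet, OnePoint.elim, Option.elim, Subtype.ext_iff] at h
    · rfl
    · exact absurd h.symm (by positivity)
    · exact absurd h (by positivity)
    · rw [show m = n by simpa using h]
  · rintro ⟨x, rfl | ⟨n, hn, rfl⟩⟩
    · exact ⟨OnePoint.infty, rfl⟩
    · refine ⟨((n - 1 : ℕ) : OnePoint ℕ), Subtype.ext ?_⟩
      simp [onePointNatToSSet, Nat.cast_sub hn]

def onePointNatHomeomorphSSet : OnePoint ℕ ≃ₜ sSet :=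
  continuous_onePointNatToSSet.homeoOfEquivCompactToT2
    (f := Equiv.ofBijective _ bijective_onePointNatToSSet)

lemma sMap_onePointNatHomeomorphSSet_coe (n : ℕ) :
    sMap (onePointNatHomeomorphSSet n) = Finsupp.single (n + 1) 1 := by
  change sMap (onePointNatToSSet n) = _
  rw [sMap, if_neg (by exact one_div_ne_zero (Nat.cast_ne_zero.2 n.succ_ne_zero))]
  simp only [onePointNatToSSet, OnePoint.elim, Option.elim, one_div_one_div, Nat.ceil_natCast]

lemma sMap_onePointNatHomeomorphSSet_infty :
    sMap (onePointNatHomeomorphSSet OnePoint.infty) = 0 := if_pos rfl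

lemma continuous_comp_sMap_iff {Y : Type*} [TopologicalSpace Y] (g : (ℕ →₀ ℤ) → Y) :
    Continuous (g ∘ sMap) ↔
      Tendsto (fun n : ℕ => g (Finsupp.single n 1)) atTop (𝓝 (g 0)) := by
  rw [← onePointNatHomeomorphSSet.comp_continuous_iff', OnePoint.continuous_iff_from_nat]
  simp only [Function.comp_apply, sMap_onePointNatHomeomorphSSet_coe,
    sMap_onePointNatHomeomorphSSet_infty]
  exact tendsto_add_atTop_iff_nat (f := fun n => g (Finsupp.single n 1)) 1

/-- A group homomorphism `χ : ℤ^(ℕ) → 𝕊` is `τ`-continuous iff `χ(e_n) → 1`;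
i.e. the character group of `A_G(s)` is exactly `c₀(𝕊)` via `χ ↦ (χ(e_n))_n`. -/
theorem continuous_char_iff_c0 (χ : (ℕ →₀ ℤ) → Circle) (hχ : IsChar χ) :
    @Continuous _ _ tau _ χ ↔
      Tendsto (fun n : ℕ => χ (Finsupp.single n 1)) atTop (𝓝 (1 : Circle)) := by
  rw [tau, tauGT_eq_coinduced, hχ.continuous_coinduced_iff, continuous_comp_sMap_iff,
    hχ.map_zero]

end
end

section
/- Every locally quasi-convex abelian topological group (G,τ) admits a quasi-Mackey topology: there exists a locally quasi-convex group topology μ on G that is compatible with τ and such that there is no locally quasi-convex group topology ν on G compatible with τ with μ < ν (μ strictly coarser than ν). -/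
/-!
Zorn's lemma, applied to the locally quasi-convex group topologies compatible with `τ`, ordered by
fineness. The neighborhoods of `0` for the supremum of a chain are those of its members, so local
quasi-convexity passes to the supremum. Compatibility passes too, because a character `χ` is
continuous as soon as `χ⁻¹(𝕊₊)` is a neighborhood of `0`, and for the supremum this already happens
in some member of the chain. The continuity criterion holds since `1 - Re z ≤ 2^(-m)` whenever
`z^(2^k) ∈ 𝕊₊` for all `k ≤ m`.
-/

open Filter Topology

noncomputable section

section

variable {G : Type*} [AddCommGroup G]

theorem IsChar.map_zero_s13 {χ : G → Circle} (hχ : IsChar χ) : χ 0 = 1 := by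
  have h := hχ 0 0
  rw [add_zero] at h
  exact left_eq_mul.mp h

theorem IsChar.map_nsmul {χ : G → Circle} (hχ : IsChar χ) (n : ℕ) (x : G) :
    χ (n • x) = χ x ^ n := by
  induction n with
  | zero => simpa using hχ.map_zero_s13
  | succ n ih => rw [succ_nsmul, hχ, ih, pow_succ]

def IsChar.toAddMonoidHom {χ : G → Circle} (hχ : IsChar χ) : G →+ Additive Circle :=
  AddMonoidHom.mk' (fun x => Additive.ofMul (χ x)) hχ

theorem Circle.re_sq (z : Circle) : ((z ^ 2 : Circle) : ℂ).re = 2 * (z : ℂ).re ^ 2 - 1 := by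
  have h := Circle.normSq_coe z
  rw [Complex.normSq_apply] at h
  rw [sq, Circle.coe_mul, Complex.mul_re]
  linear_combination -h

/-- Squaring doubles the distance to `1`: `1 - Re z² = 2 (1 - Re z)(1 + Re z) ≥ 2 (1 - Re z)`
as long as `Re z ≥ 0`. -/
theorem Circle.one_sub_re_le_of_pow_two_pow_mem_sPlus {z : Circle} {m : ℕ}
    (h : ∀ k ≤ m, z ^ 2 ^ k ∈ SPlus) : 1 - (z : ℂ).re ≤ (2 ^ m)⁻¹ := by
  induction m generalizing z with
  | zero => simpa [SPlus] using h 0 le_rfl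
  | succ m ih =>
    have hsq : 1 - ((z ^ 2 : Circle) : ℂ).re ≤ (2 ^ m)⁻¹ :=
      ih fun k hk => by simpa [← pow_mul, ← pow_succ'] using h (k + 1) (by omega)
    have hre : 0 ≤ (z : ℂ).re := by simpa [SPlus] using h 0 (Nat.zero_le _)
    have hle : (z : ℂ).re ≤ 1 := (Complex.re_le_norm _).trans_eq (Circle.norm_coe z)
    rw [Circle.re_sq] at hsq
    rw [pow_succ, mul_inv]
    nlinarith [mul_nonneg hre (sub_nonneg.mpr hle)]

theorem Circle.dist_one_sq (z : Circle) : dist z 1 ^ 2 = 2 * (1 - (z : ℂ).re) := by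
  have h := Circle.normSq_coe z
  rw [Complex.normSq_apply] at h
  change dist (z : ℂ) 1 ^ 2 = _
  rw [Complex.dist_eq, Complex.sq_norm, Complex.normSq_apply]
  simp only [Complex.sub_re, Complex.one_re, Complex.sub_im, Complex.one_im]
  linarith

theorem Circle.exists_pow_two_pow_mem_sPlus_subset {N : Set Circle} (hN : N ∈ 𝓝 1) :
    ∃ m : ℕ, {z : Circle | ∀ k ≤ m, z ^ 2 ^ k ∈ SPlus} ⊆ N := by
  obtain ⟨r, hr, hball⟩ := Metric.mem_nhds_iff.mp hN
  obtain ⟨m, hm⟩ :=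
    exists_pow_lt_of_lt_one (by positivity : 0 < r ^ 2 / 2) (by norm_num : (1 / 2 : ℝ) < 1)
  refine ⟨m, fun z hz => hball ?_⟩
  have h := Circle.one_sub_re_le_of_pow_two_pow_mem_sPlus hz
  rw [Metric.mem_ball, ← sq_lt_sq₀ dist_nonneg hr.le, Circle.dist_one_sq]
  rw [one_div, inv_pow] at hm
  linarith

theorem sPlus_mem_nhds_one : SPlus ∈ 𝓝 (1 : Circle) := by
  have hc : Continuous fun z : Circle => (z : ℂ).re :=
    Complex.continuous_re.comp continuous_subtype_val
  exact hc.continuousAt.preimage_mem_nhds (Ici_mem_nhds (by simp))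

theorem IsChar.continuous_iff_preimage_sPlus_mem_nhds [TopologicalSpace G]
    [IsTopologicalAddGroup G] {χ : G → Circle} (hχ : IsChar χ) :
    Continuous χ ↔ χ ⁻¹' SPlus ∈ 𝓝 0 := by
  refine ⟨fun hcont => hcont.continuousAt.preimage_mem_nhds (hχ.map_zero_s13 ▸ sPlus_mem_nhds_one),
    fun hW => ?_⟩
  suffices ContinuousAt χ 0 from continuous_of_continuousAt_zero hχ.toAddMonoidHom this
  intro N hN
  rw [hχ.map_zero_s13] at hN
  obtain ⟨m, hm⟩ := Circle.exists_pow_two_pow_mem_sPlus_subset hN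
  have hpow : ∀ k ∈ Set.Iic m, ∀ᶠ x in 𝓝 (0 : G), χ x ^ 2 ^ k ∈ SPlus := fun k _ =>
    (((continuous_nsmul (2 ^ k)).tendsto' (0 : G) 0 (smul_zero _)).eventually hW).mono
      fun x hx => by rwa [hχ.map_nsmul] at hx
  exact mem_map.mpr <|
    mem_of_superset ((Set.finite_Iic m).eventually_all.mpr hpow) fun _ hx => hm hx

theorem IsQuasiConvex.mono {t₁ t₂ : TopologicalSpace G} {A : Set G} (hA : IsQuasiConvex t₁ A)
    (h : t₂ ≤ t₁) : IsQuasiConvex t₂ A := fun g hg => by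
  obtain ⟨χ, hχ, hcont, hA, hg⟩ := hA g hg
  exact ⟨χ, hχ, continuous_le_dom h hcont, hA, hg⟩

namespace AddGroupTopology

theorem mem_nhds_sInf_iff {c : Set (AddGroupTopology G)} (hc : DirectedOn (· ≥ ·) c)
    (hne : c.Nonempty) {x : G} {U : Set G} :
    U ∈ @nhds G (sInf c).toTopologicalSpace x ↔
      ∃ t ∈ c, U ∈ @nhds G t.toTopologicalSpace x := by
  rw [toTopologicalSpace_sInf, nhds_sInf, iInf_image]
  exact mem_biInf_of_directed
    (hc.mono' fun _ _ _ _ h => nhds_mono (toTopologicalSpace_le.mpr h)) hne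

theorem locallyQuasiConvex_sInf {c : Set (AddGroupTopology G)} (hc : DirectedOn (· ≥ ·) c)
    (hne : c.Nonempty) (h : ∀ t ∈ c, LocallyQuasiConvex t.toTopologicalSpace) :
    LocallyQuasiConvex (sInf c).toTopologicalSpace := fun U hU => by
  obtain ⟨t, htc, hUt⟩ := (mem_nhds_sInf_iff hc hne).mp hU
  obtain ⟨V, hV, hVU, hVqc⟩ := h t htc U hUt
  exact ⟨V, (mem_nhds_sInf_iff hc hne).mpr ⟨t, htc, hV⟩, hVU,
    hVqc.mono (toTopologicalSpace_le.mpr (sInf_le htc))⟩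

theorem compatible_sInf {c : Set (AddGroupTopology G)} (hc : DirectedOn (· ≥ ·) c)
    (hne : c.Nonempty) {τ : TopologicalSpace G}
    (h : ∀ t ∈ c, Compatible t.toTopologicalSpace τ) :
    Compatible (sInf c).toTopologicalSpace τ := fun χ hχ => by
  have hcont_iff := fun t : AddGroupTopology G =>
    @IsChar.continuous_iff_preimage_sPlus_mem_nhds G _ t.toTopologicalSpace t.2 χ hχ
  constructor
  · intro hcont
    obtain ⟨t, htc, hSt⟩ := (mem_nhds_sInf_iff hc hne).mp ((hcont_iff _).mp hcont)
    exact (h t htc χ hχ).mp ((hcont_iff t).mpr hSt)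
  · intro hcont
    obtain ⟨t, htc⟩ := hne
    exact continuous_le_dom (toTopologicalSpace_le.mpr (sInf_le htc)) ((h t htc χ hχ).mpr hcont)

end AddGroupTopology

end

/-- Every locally quasi-convex abelian topological group `(G, τ)` admits a quasi-Mackey
topology: a locally quasi-convex group topology `μ` compatible with `τ` such that no
locally quasi-convex group topology `ν` compatible with `τ` is strictly finer than `μ`
(i.e. with every `μ`-open set `ν`-open and `ν ≠ μ`). -/
theorem exists_quasiMackey {G : Type*} [AddCommGroup G] (τ : AddGroupTopology G)
    (hτ : LocallyQuasiConvex τ.toTopologicalSpace) :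
    ∃ μ : AddGroupTopology G, LocallyQuasiConvex μ.toTopologicalSpace ∧
      Compatible μ.toTopologicalSpace τ.toTopologicalSpace ∧
      ¬ ∃ ν : AddGroupTopology G, LocallyQuasiConvex ν.toTopologicalSpace ∧
          Compatible ν.toTopologicalSpace τ.toTopologicalSpace ∧
          (∀ U : Set G, IsOpen[μ.toTopologicalSpace] U → IsOpen[ν.toTopologicalSpace] U) ∧
          μ.toTopologicalSpace ≠ ν.toTopologicalSpace := by
  let S : Set (AddGroupTopology G) := {t | LocallyQuasiConvex t.toTopologicalSpace ∧
      Compatible t.toTopologicalSpace τ.toTopologicalSpace}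
  have hsInf_mem : ∀ c ⊆ S, DirectedOn (· ≥ ·) c → c.Nonempty → sInf c ∈ S :=
    fun c hcS hc hne => ⟨AddGroupTopology.locallyQuasiConvex_sInf hc hne fun t ht => (hcS ht).1,
      AddGroupTopology.compatible_sInf hc hne fun t ht => (hcS ht).2⟩
  -- `≤` means "finer", so a finest element of `S` is minimal: Zorn is applied in the order dual.
  obtain ⟨μ, -, hμ⟩ := zorn_le_nonempty₀ (α := (AddGroupTopology G)ᵒᵈ) S
    (fun c hcS hc y hy => ⟨OrderDual.toDual (sInf (OrderDual.ofDual ⁻¹' c)),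
      hsInf_mem _ hcS hc.directedOn ⟨y, hy⟩, fun _ hz => OrderDual.le_toDual.mpr (sInf_le hz)⟩)
    τ ⟨hτ, fun _ _ => Iff.rfl⟩
  have hμ : Minimal (· ∈ S) (OrderDual.ofDual μ) := hμ
  refine ⟨OrderDual.ofDual μ, hμ.prop.1, hμ.prop.2, ?_⟩
  rintro ⟨ν, hνlqc, hνcompat, hfiner, hne⟩
  have hνμ : ν ≤ OrderDual.ofDual μ := AddGroupTopology.toTopologicalSpace_le.mp hfiner
  exact hne (congrArg _ (le_antisymm (hμ.le_of_le ⟨hνlqc, hνcompat⟩ hνμ) hνμ))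

end
end
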